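/- Let X be a locally compact Hausdorff space and let Y be a separable, non-discrete metric space with at least two points. Then the following are equivalent: (1) MU(X,Y) is second-countable and metrizable; (2) MU(X,Y) is locally second-countable; (3) X is countable and discrete. -/

import Mathlib

open TopologicalSpace Metric Set

noncomputable section

/-- `F` is usco: upper semicontinuous with nonempty compact values. -/
def IsUsco {X Y : Type*} [TopologicalSpace X] [TopologicalSpace Y] (F : X → Set Y) : Prop :=
  (∀ x, (F x).Nonempty) ∧ (∀ x, IsCompact (F x)) ∧
    ∀ x, ∀ V : Set Y, IsOpen V → F x ⊆ V →
      ∃ U : Set X, IsOpen U ∧ x ∈ U ∧ ∀ x' ∈ U, F x' ⊆ V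

/-- `F` is minimal usco: minimal w.r.t. inclusion (of graphs) among usco maps. -/
def IsMinimalUsco {X Y : Type*} [TopologicalSpace X] [TopologicalSpace Y] (F : X → Set Y) : Prop :=
  IsUsco F ∧ ∀ G : X → Set Y, IsUsco G → (∀ x, G x ⊆ F x) → G = F

/-- The space `MU(X,Y)` of minimal usco maps from `X` to `Y`, as a subspace of the space of all
maps `X → K(Y)` with the uniformity of uniform convergence on compact sets, where the hyperspace
`K(Y)` of nonempty compact subsets of `Y` carries the Hausdorff metric. -/
def MU (X Y : Type*) [TopologicalSpace X] [MetricSpace Y] : Type _ :=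
  {F : UniformOnFun X (NonemptyCompacts Y) {K : Set X | IsCompact K} //
    IsMinimalUsco (fun x => ((UniformOnFun.toFun {K : Set X | IsCompact K} F) x : Set Y))}

instance (X Y : Type*) [TopologicalSpace X] [MetricSpace Y] : UniformSpace (MU X Y) :=
  inferInstanceAs (UniformSpace
    {F : UniformOnFun X (NonemptyCompacts Y) {K : Set X | IsCompact K} //
      IsMinimalUsco (fun x => ((UniformOnFun.toFun {K : Set X | IsCompact K} F) x : Set Y))})

instance (X Y : Type*) [TopologicalSpace X] [MetricSpace Y] : TopologicalSpace (MU X Y) :=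
  (inferInstance : UniformSpace (MU X Y)).toTopologicalSpace

/-- The underlying multifunction of a minimal usco map. -/
def MU.toFun {X Y : Type*} [TopologicalSpace X] [MetricSpace Y] (F : MU X Y) : X → Set Y :=
  fun x => ((UniformOnFun.toFun {K : Set X | IsCompact K} F.val) x : Set Y)

/-- The value of a minimal usco map at a point, as a nonempty compact subset of `Y`. -/
def MU.val' {X Y : Type*} [TopologicalSpace X] [MetricSpace Y] (F : MU X Y) (x : X) :
    NonemptyCompacts Y :=
  UniformOnFun.toFun {K : Set X | IsCompact K} F.val x

/-- `D₂(X,Y)`: the minimal usco maps whose total image has at most two points. -/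
def D2 (X Y : Type*) [TopologicalSpace X] [MetricSpace Y] : Set (MU X Y) :=
  {F | (⋃ x, F.toFun x).encard ≤ 2}

/-- A space is locally σ-compact if every point has a σ-compact neighborhood. -/
def LocallySigmaCompact (Z : Type*) [TopologicalSpace Z] : Prop :=
  ∀ z : Z, ∃ s ∈ nhds z, IsSigmaCompact s

end

noncomputable section Aux
set_option linter.unusedSectionVars false
namespace S18

variable {X Y : Type*} [TopologicalSpace X] [MetricSpace Y]

/-- singleton as a nonempty compact -/
def sing (y : Y) : NonemptyCompacts Y := ⟨⟨{y}, isCompact_singleton⟩, Set.singleton_nonempty y⟩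

@[simp] lemma sing_coe (y : Y) : (sing y : Set Y) = {y} := rfl

lemma hausdorffEdist_singleton_singleton (a b : Y) :
    Metric.hausdorffEDist ({a} : Set Y) {b} = edist a b := by
  rw [Metric.hausdorffEDist_def]
  simp [Metric.infEDist_singleton, edist_comm]

lemma hausdorffDist_singleton_singleton (a b : Y) :
    hausdorffDist ({a} : Set Y) {b} = dist a b := by
  rw [Metric.hausdorffDist, hausdorffEdist_singleton_singleton, dist_edist]

lemma dist_sing (a b : Y) : dist (sing a) (sing b) = dist a b := by
  rw [NonemptyCompacts.dist_eq, sing_coe, sing_coe, hausdorffDist_singleton_singleton]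

lemma isMinimalUsco_of_continuous {f : X → Y} (hf : Continuous f) :
    IsMinimalUsco (fun x => ({f x} : Set Y)) := by
  refine ⟨⟨fun x => Set.singleton_nonempty _, fun x => isCompact_singleton, ?_⟩, ?_⟩
  · intro x V hV hsub
    exact ⟨f ⁻¹' V, hV.preimage hf, hsub rfl, fun x' hx' =>
      Set.singleton_subset_iff.2 hx'⟩
  · intro G hG hle
    funext x
    refine subset_antisymm (hle x) ?_
    obtain ⟨y, hy⟩ := hG.1 x
    have : y = f x := hle x hy
    exact Set.singleton_subset_iff.2 (this ▸ hy)

end S18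
end Aux
noncomputable section Aux2
set_option linter.unusedSectionVars false
namespace S18
open Set
open scoped Classical

variable {X Y : Type*} [TopologicalSpace X] [MetricSpace Y]

/-- Two-valued map: `a` on `V`, both on the boundary, `b` outside the closure. -/
def tv (V : Set X) (a b : Y) : X → Set Y := fun x =>
  if x ∈ V then {a} else if x ∈ closure V then {a, b} else {b}

lemma tv_subset (V : Set X) (a b : Y) (x : X) : tv V a b x ⊆ {a, b} := by
  unfold tv
  split_ifs with h1 h2
  · exact singleton_subset_iff.2 (mem_insert a {b})
  · exact subset_rfl
  · exact singleton_subset_iff.2 (mem_insert_of_mem a rfl)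

lemma tv_nonempty (V : Set X) (a b : Y) (x : X) : (tv V a b x).Nonempty := by
  unfold tv; split_ifs <;> simp

lemma tv_compact (V : Set X) (a b : Y) (x : X) : IsCompact (tv V a b x) := by
  unfold tv; split_ifs
  · exact isCompact_singleton
  · exact ((finite_singleton b).insert a).isCompact
  · exact isCompact_singleton

lemma tv_of_mem {V : Set X} {x : X} (hx : x ∈ V) (a b : Y) : tv V a b x = {a} := if_pos hx

lemma tv_of_not_mem_closure {V : Set X} {x : X} (hx : x ∉ closure V) (a b : Y) :
    tv V a b x = {b} := by
  have hx' : x ∉ V := fun h => hx (subset_closure h)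
  simp [tv, hx, hx']

lemma isMinimalUsco_tv {V : Set X} (hreg : interior (closure V) = V) {a b : Y} (hab : a ≠ b) :
    IsMinimalUsco (tv V a b) := by
  have hVopen : IsOpen V := by rw [← hreg]; exact isOpen_interior
  have hd : 0 < dist a b := dist_pos.2 hab
  constructor
  · refine ⟨tv_nonempty V a b, tv_compact V a b, ?_⟩
    intro x W hW hsub
    by_cases hx : x ∈ V
    · refine ⟨V, hVopen, hx, fun x' hx' => ?_⟩
      rw [tv_of_mem hx']
      rw [tv_of_mem hx] at hsub; exact hsub
    · by_cases hx2 : x ∈ closure V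
      · refine ⟨univ, isOpen_univ, mem_univ x, fun x' _ => ?_⟩
        have : tv V a b x = ({a, b} : Set Y) := by simp [tv, hx, hx2]
        exact (tv_subset V a b x').trans (this ▸ hsub)
      · refine ⟨(closure V)ᶜ, isClosed_closure.isOpen_compl, hx2, fun x' hx' => ?_⟩
        rw [tv_of_not_mem_closure hx']
        rw [tv_of_not_mem_closure hx2] at hsub; exact hsub
  · intro G hG hle
    funext x
    refine subset_antisymm (hle x) ?_
    by_cases hx : x ∈ V
    · rw [tv_of_mem hx]
      obtain ⟨y, hy⟩ := hG.1 x
      have : y = a := by have := hle x hy; rwa [tv_of_mem hx, mem_singleton_iff] at this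
      exact singleton_subset_iff.2 (this ▸ hy)
    · by_cases hx2 : x ∈ closure V
      · have htv : tv V a b x = ({a, b} : Set Y) := by simp [tv, hx, hx2]
        rw [htv]
        have hGsub : G x ⊆ {a, b} := (hle x).trans (htv ▸ subset_rfl)
        have ha : a ∈ G x := by
          by_contra hna
          have hGb : G x ⊆ {b} := by
            intro y hy
            rcases hGsub hy with h | h
            · exact absurd (h ▸ hy) hna
            · exact h
          obtain ⟨U, hUopen, hxU, hU⟩ := hG.2.2 x (ball b (dist a b)) isOpen_ball
            (hGb.trans (singleton_subset_iff.2 (mem_ball_self hd)))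
          obtain ⟨z, hzU, hzV⟩ := mem_closure_iff.1 hx2 U hUopen hxU
          obtain ⟨y, hy⟩ := hG.1 z
          have hya : y = a := by
            have := hle z hy; rwa [tv_of_mem hzV, mem_singleton_iff] at this
          have : a ∈ ball b (dist a b) := hya ▸ hU z hzU hy
          rw [mem_ball] at this
          exact absurd this (lt_irrefl _)
        have hb : b ∈ G x := by
          by_contra hnb
          have hGa : G x ⊆ {a} := by
            intro y hy
            rcases hGsub hy with h | h
            · exact h
            · exact absurd (h ▸ hy) hnb
          obtain ⟨U, hUopen, hxU, hU⟩ := hG.2.2 x (ball a (dist a b)) isOpen_ball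
            (hGa.trans (singleton_subset_iff.2 (mem_ball_self hd)))
          have hxi : x ∉ interior (closure V) := by rw [hreg]; exact hx
          have hUsub : ¬ U ⊆ closure V := fun h => hxi (interior_maximal h hUopen hxU)
          obtain ⟨z, hzU, hzV⟩ := not_subset.1 hUsub
          obtain ⟨y, hy⟩ := hG.1 z
          have hyb : y = b := by
            have := hle z hy; rwa [tv_of_not_mem_closure hzV, mem_singleton_iff] at this
          have : b ∈ ball a (dist a b) := hyb ▸ hU z hzU hy
          rw [mem_ball, dist_comm] at this
          exact absurd this (lt_irrefl _)
        exact insert_subset_iff.2 ⟨ha, singleton_subset_iff.2 hb⟩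
      · rw [tv_of_not_mem_closure hx2]
        obtain ⟨y, hy⟩ := hG.1 x
        have : y = b := by
          have := hle x hy; rwa [tv_of_not_mem_closure hx2, mem_singleton_iff] at this
        exact singleton_subset_iff.2 (this ▸ hy)

/-- Two-valued map packaged as nonempty compacts -/
def tvNC (V : Set X) (a b : Y) (x : X) : NonemptyCompacts Y :=
  ⟨⟨tv V a b x, tv_compact V a b x⟩, tv_nonempty V a b x⟩

@[simp] lemma tvNC_coe (V : Set X) (a b : Y) (x : X) : (tvNC V a b x : Set Y) = tv V a b x := rfl

lemma dist_sing_tvNC_le (V : Set X) (a b : Y) (x : X) :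
    dist (sing b) (tvNC V a b x) ≤ dist a b := by
  rw [NonemptyCompacts.dist_eq]
  refine hausdorffDist_le_of_mem_dist dist_nonneg ?_ ?_
  · intro y hy
    rw [sing_coe, mem_singleton_iff] at hy
    obtain ⟨z, hz⟩ := tv_nonempty V a b x
    rcases tv_subset V a b x hz with h | h
    · exact ⟨z, hz, by rw [hy, h, dist_comm]⟩
    · exact ⟨z, hz, by rw [hy, h, dist_self]; exact dist_nonneg⟩
  · intro y hy
    rcases tv_subset V a b x hy with h | h
    · exact ⟨b, rfl, by rw [h]⟩
    · exact ⟨b, rfl, by rw [h, dist_self]; exact dist_nonneg⟩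

end S18
end Aux2
noncomputable section Aux3
set_option linter.unusedSectionVars false
namespace S18
open Set Filter

variable {X Y : Type*} [TopologicalSpace X] [MetricSpace Y]

def mk' (f : X → NonemptyCompacts Y) (hf : IsMinimalUsco fun x => (f x : Set Y)) : MU X Y :=
  ⟨UniformOnFun.ofFun {K : Set X | IsCompact K} f, hf⟩

@[simp] lemma mk'_val' (f : X → NonemptyCompacts Y) (hf) (x : X) :
    (mk' f hf).val' x = f x := rfl

lemma isCompact_directed :
    DirectedOn (· ⊆ ·) {K : Set X | IsCompact K} :=
  fun a ha b hb => ⟨a ∪ b, ha.union hb, subset_union_left, subset_union_right⟩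

lemma mu_uniformity_basis :
    (uniformity (UniformOnFun X (NonemptyCompacts Y) {K : Set X | IsCompact K})).HasBasis
      (fun Kε : Set X × ℝ => IsCompact Kε.1 ∧ 0 < Kε.2)
      (fun Kε => UniformOnFun.gen {K : Set X | IsCompact K} Kε.1
        {p : NonemptyCompacts Y × NonemptyCompacts Y | dist p.1 p.2 < Kε.2}) :=
  UniformOnFun.hasBasis_uniformity_of_basis X (NonemptyCompacts Y) {K : Set X | IsCompact K}
    ⟨∅, isCompact_empty⟩ isCompact_directed Metric.uniformity_basis_dist

lemma mu_nhds_basis (F : MU X Y) :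
    (nhds F).HasBasis (fun Kε : Set X × ℝ => IsCompact Kε.1 ∧ 0 < Kε.2)
      (fun Kε => {G : MU X Y | ∀ x ∈ Kε.1, dist (F.val' x) (G.val' x) < Kε.2}) := by
  have h1 := nhds_basis_uniformity' (mu_uniformity_basis (X := X) (Y := Y)) (x := F.val)
  have h2 : nhds F = Filter.comap Subtype.val (nhds F.val) := nhds_subtype_eq_comap
  rw [h2]
  exact (h1.comap Subtype.val).congr (fun _ => Iff.rfl) (fun _ _ => rfl)

lemma mu_ball_mem_nhds (F : MU X Y) {K : Set X} (hK : IsCompact K) {ε : ℝ} (hε : 0 < ε) :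
    {G : MU X Y | ∀ x ∈ K, dist (F.val' x) (G.val' x) < ε} ∈ nhds F :=
  (mu_nhds_basis F).mem_of_mem (i := (K, ε)) ⟨hK, hε⟩

lemma not_secondCountable {N : Set (MU X Y)} {ι : Type*} (hι : ¬ Countable ι)
    (f : ι → MU X Y) (hfN : ∀ i, f i ∈ N) (C : ι → Set X) (hC : ∀ i, IsCompact (C i))
    {δ : ℝ} (hδ : 0 < δ)
    (hsep : ∀ i j, i ≠ j → ∃ x ∈ C i, δ ≤ dist ((f i).val' x) ((f j).val' x)) :
    ¬ SecondCountableTopology ↥N := by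
  intro hsc
  obtain ⟨b, hbc, -, hb⟩ := TopologicalSpace.exists_countable_basis ↥N
  have key : ∀ i : ι, ∃ t ∈ b, (⟨f i, hfN i⟩ : ↥N) ∈ t ∧
      t ⊆ {G : ↥N | ∀ x ∈ C i, dist ((f i).val' x) ((G : MU X Y).val' x) < δ/2} := by
    intro i
    refine (hb.mem_nhds_iff).1 ?_
    have h1 : {G : MU X Y | ∀ x ∈ C i, dist ((f i).val' x) (G.val' x) < δ/2} ∈ nhds (f i) :=
      mu_ball_mem_nhds (f i) (hC i) (by linarith)
    rw [nhds_subtype_eq_comap]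
    exact Filter.preimage_mem_comap h1
  choose t ht hmem hsub using key
  have hinj : Function.Injective t := by
    intro i j hij
    by_contra hne
    have h2 : (⟨f j, hfN j⟩ : ↥N) ∈ t i := hij ▸ hmem j
    have h3 := hsub i h2
    obtain ⟨x, hxC, hxd⟩ := hsep i j hne
    have := h3 x hxC
    simp only at this
    linarith
  refine hι ?_
  have : Countable ↥b := hbc.to_subtype
  exact Function.Injective.countable (f := fun i => (⟨t i, ht i⟩ : ↥b))
    (fun i j hij => hinj (congrArg Subtype.val hij))

lemma not_countable_set_nat : ¬ Countable (Set ℕ) := by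
  intro h
  obtain ⟨f, hf⟩ := (countable_iff_exists_injective (Set ℕ)).1 h
  exact Function.cantor_injective f hf

end S18
end Aux3
noncomputable section Aux4
set_option linter.unusedSectionVars false
namespace S18
open Set

variable {X : Type*} [TopologicalSpace X] [T2Space X] [LocallyCompactSpace X]

lemma shrink {U : Set X} (hU : IsOpen U) {x : X} (hx : x ∈ U) :
    ∃ W : Set X, IsOpen W ∧ x ∈ W ∧ closure W ⊆ U := by
  obtain ⟨K, hKc, hxK, hKU⟩ := exists_compact_subset hU hx
  exact ⟨interior K, isOpen_interior, hxK,
    (closure_minimal interior_subset hKc.isClosed).trans hKU⟩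

lemma step {O : Set X} (hO : IsOpen O) (hinf : O.Infinite) :
    ∃ q : Set X × Set X, IsOpen q.1 ∧ q.1.Nonempty ∧ q.1 ⊆ O ∧
      IsOpen q.2 ∧ q.2.Infinite ∧ q.2 ⊆ O ∧ Disjoint q.1 q.2 := by
  obtain ⟨a, ha, b, hb, hab⟩ := hinf.nontrivial
  obtain ⟨A, B, hAo, hBo, haA, hbB, hAB⟩ := t2_separation hab
  obtain ⟨A', hA'o, haA', hA'⟩ := shrink (hAo.inter hO) ⟨haA, ha⟩
  obtain ⟨B', hB'o, hbB', hB'⟩ := shrink (hBo.inter hO) ⟨hbB, hb⟩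
  by_cases hcase : (O \ closure A').Infinite
  · refine ⟨(A', O \ closure A'), hA'o, ⟨a, haA'⟩,
      (subset_closure.trans hA').trans inter_subset_right,
      hO.sdiff isClosed_closure, hcase, diff_subset, ?_⟩
    exact disjoint_sdiff_right.mono_left subset_closure
  · have hsplit : O ⊆ (O \ closure A') ∪ (O ∩ closure A') := by
      intro x hx
      by_cases h : x ∈ closure A'
      · exact Or.inr ⟨hx, h⟩
      · exact Or.inl ⟨hx, h⟩
    have h1 : (O ∩ closure A').Infinite := by
      by_contra h
      rw [Set.not_infinite] at h hcase
      exact hinf ((hcase.union h).subset hsplit)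
    have hdisj : closure A' ∩ closure B' = ∅ := by
      have h1 : closure A' ⊆ A := hA'.trans inter_subset_left
      have h2 : closure B' ⊆ B := hB'.trans inter_subset_left
      exact subset_empty_iff.1 fun x hx =>
        (hAB.le_bot ⟨h1 hx.1, h2 hx.2⟩ : x ∈ (∅ : Set X))
    refine ⟨(B', O \ closure B'), hB'o, ⟨b, hbB'⟩,
      (subset_closure.trans hB').trans inter_subset_right,
      hO.sdiff isClosed_closure, ?_, diff_subset, ?_⟩
    · refine h1.mono fun x hx => ⟨hx.1, fun hB => ?_⟩
      have hmem : x ∈ closure A' ∩ closure B' := ⟨hx.2, hB⟩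
      rw [hdisj] at hmem
      exact absurd hmem (Set.notMem_empty x)
    · exact disjoint_sdiff_right.mono_left subset_closure

lemma exists_disjoint_opens {Z : Set X} (hZ : IsOpen Z) (hinf : Z.Infinite) :
    ∃ W : ℕ → Set X, (∀ n, IsOpen (W n)) ∧ (∀ n, (W n).Nonempty) ∧ (∀ n, W n ⊆ Z) ∧
      ∀ m n, m ≠ n → Disjoint (W m) (W n) := by
  classical
  let T := {O : Set X // IsOpen O ∧ O.Infinite ∧ O ⊆ Z}
  have step' : ∀ O : T, ∃ q : Set X × Set X, IsOpen q.1 ∧ q.1.Nonempty ∧ q.1 ⊆ O.1 ∧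
      IsOpen q.2 ∧ q.2.Infinite ∧ q.2 ⊆ O.1 ∧ Disjoint q.1 q.2 :=
    fun O => step O.2.1 O.2.2.1
  choose q hq1 hq2 hq3 hq4 hq5 hq6 hq7 using step'
  let nextT : T → T := fun O => ⟨(q O).2, hq4 O, hq5 O, (hq6 O).trans O.2.2.2⟩
  let seq : ℕ → T := fun n => Nat.rec (⟨Z, hZ, hinf, subset_rfl⟩ : T) (fun _ p => nextT p) n
  have hseq : ∀ n, seq (n + 1) = nextT (seq n) := fun n => rfl
  let W : ℕ → Set X := fun n => (q (seq n)).1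
  have key : ∀ n m, m < n → (seq n).1 ⊆ (q (seq m)).2 := by
    intro n
    induction n with
    | zero => omega
    | succ k ih =>
      intro m hm
      have hstep : (seq (k + 1)).1 ⊆ (q (seq k)).2 := subset_rfl
      rcases Nat.lt_or_ge m k with h | h
      · exact (hstep.trans (hq6 (seq k))).trans (ih m h)
      · have hmk : m = k := by omega
        subst hmk
        exact hstep
  refine ⟨W, fun n => hq1 _, fun n => hq2 _, fun n => (hq3 _).trans (seq n).2.2.2, ?_⟩
  have main : ∀ m n, m < n → Disjoint (W m) (W n) := by
    intro m n hmn
    have : W n ⊆ (q (seq m)).2 := (hq3 (seq n)).trans (key n m hmn)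
    exact (hq7 (seq m)).mono_right this
  intro m n hmn
  rcases Nat.lt_or_ge m n with h | h
  · exact main m n h
  · have : n < m := by omega
    exact (main n m this).symm

end S18
end Aux4
noncomputable section Aux5
set_option linter.unusedSectionVars false
namespace S18
open Set Metric

variable {X Y : Type*} [TopologicalSpace X] [MetricSpace Y]

lemma regOpen_interior_closure (S : Set X) :
    interior (closure (interior (closure S))) = interior (closure S) := by
  apply subset_antisymm
  · exact interior_mono (closure_minimal interior_subset isClosed_closure)
  · exact interior_maximal subset_closure isOpen_interior

lemma open_disjoint_closure {U S : Set X} (hU : IsOpen U) (h : Disjoint U S) :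
    Disjoint U (closure S) := by
  have h1 : S ⊆ Uᶜ := fun x hxS hxU => Set.disjoint_left.1 h hxU hxS
  have h2 : closure S ⊆ Uᶜ := closure_minimal h1 hU.isClosed_compl
  exact Set.disjoint_left.2 fun x hxU hxS => h2 hxS hxU

lemma exists_acc_point (hY : ¬DiscreteTopology Y) :
    ∃ yc : Y, ∀ ε : ℝ, 0 < ε → ∃ y', y' ≠ yc ∧ dist y' yc < ε := by
  have h1 : ¬ ∀ y : Y, IsOpen ({y} : Set Y) := fun h => hY (discreteTopology_iff_isOpen_singleton.2 h)
  push_neg at h1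
  obtain ⟨yc, hy⟩ := h1
  refine ⟨yc, fun ε hε => ?_⟩
  rw [Metric.isOpen_singleton_iff] at hy
  push_neg at hy
  obtain ⟨z, hz, hzne⟩ := hy ε hε
  exact ⟨z, hzne, hz⟩

lemma discrete_of_locally_sc [T2Space X] [LocallyCompactSpace X] (hY : ¬DiscreteTopology Y)
    (h : ∀ F : MU X Y, ∃ s ∈ nhds F, SecondCountableTopology ↥s) : DiscreteTopology X := by
  by_contra hX
  have h1 : ¬ ∀ x : X, IsOpen ({x} : Set X) := fun h' => hX (discreteTopology_iff_isOpen_singleton.2 h')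
  push_neg at h1
  obtain ⟨x₀, hx₀⟩ := h1
  obtain ⟨yc, hyc⟩ := exists_acc_point hY
  set F₀ : MU X Y := mk' (fun _ => sing yc)
    (isMinimalUsco_of_continuous continuous_const) with hF₀
  obtain ⟨s, hs, hsc⟩ := h F₀
  obtain ⟨⟨K, ε⟩, ⟨hK, hε⟩, hball⟩ := (mu_nhds_basis F₀).mem_iff.1 hs
  obtain ⟨y', hy'ne, hy'ε⟩ := hyc ε hε
  set δ := dist y' yc with hδdef
  have hδ : 0 < δ := dist_pos.2 hy'ne
  obtain ⟨K₀, hK₀c, hK₀n⟩ := exists_compact_mem_nhds x₀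
  have hx₀Z : x₀ ∈ interior K₀ := mem_interior_iff_mem_nhds.2 hK₀n
  have hZinf : (interior K₀).Infinite := by
    by_contra hfin
    rw [Set.not_infinite] at hfin
    apply hx₀
    have hcl : IsClosed (interior K₀ \ {x₀}) := hfin.diff.isClosed
    have : ({x₀} : Set X) = interior K₀ ∩ (interior K₀ \ {x₀})ᶜ := by
      ext x
      constructor
      · rintro rfl
        exact ⟨hx₀Z, fun hh => hh.2 rfl⟩
      · rintro ⟨hx1, hx2⟩
        by_contra hne
        exact hx2 ⟨hx1, hne⟩
    rw [this]
    exact isOpen_interior.inter hcl.isOpen_compl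
  obtain ⟨W, hWopen, hWne, hWZ, hWdisj⟩ := exists_disjoint_opens isOpen_interior hZinf
  set V : Set ℕ → Set X := fun A => interior (closure (⋃ n ∈ A, W n)) with hV
  have hVreg : ∀ A, interior (closure (V A)) = V A := fun A => regOpen_interior_closure _
  have hclV : ∀ A, closure (V A) ⊆ closure (⋃ n ∈ A, W n) :=
    fun A => (closure_mono interior_subset).trans closure_closure.subset
  have hWV : ∀ (A) (n), n ∈ A → W n ⊆ V A := fun A n hn =>
    interior_maximal ((subset_biUnion_of_mem hn).trans subset_closure) (hWopen n)
  have hWVdisj : ∀ (A) (n), n ∉ A → Disjoint (W n) (closure (V A)) := by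
    intro A n hn
    have hd : Disjoint (W n) (⋃ m ∈ A, W m) :=
      Set.disjoint_iUnion₂_right.2 fun m hm => hWdisj n m (fun hnm => hn (hnm ▸ hm))
    exact (open_disjoint_closure (hWopen n) hd).mono_right (hclV A)
  have hVK₀ : ∀ A, closure (V A) ⊆ K₀ := by
    intro A
    have h1 : (⋃ n ∈ A, W n) ⊆ interior K₀ := iUnion₂_subset fun n _ => hWZ n
    exact (hclV A).trans ((closure_mono h1).trans
      (closure_minimal interior_subset hK₀c.isClosed))
  set FA : Set ℕ → MU X Y := fun A =>
    mk' (tvNC (V A) y' yc) (isMinimalUsco_tv (hVreg A) hy'ne) with hFA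
  have hmem : ∀ A, FA A ∈ s := by
    intro A
    apply hball
    intro x hx
    have hle : dist (F₀.val' x) ((FA A).val' x) ≤ δ := by
      show dist (sing yc) (tvNC (V A) y' yc x) ≤ δ
      exact dist_sing_tvNC_le (V A) y' yc x
    exact lt_of_le_of_lt hle hy'ε
  have hsep : ∀ A B : Set ℕ, A ≠ B →
      ∃ x ∈ K₀, δ ≤ dist ((FA A).val' x) ((FA B).val' x) := by
    intro A B hAB
    have hex : ∃ n, (n ∈ A ∧ n ∉ B) ∨ (n ∈ B ∧ n ∉ A) := by
      by_contra hc
      push_neg at hc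
      apply hAB
      ext n
      exact ⟨fun hn => (hc n).1 hn, fun hn => (hc n).2 hn⟩
    obtain ⟨n, hn⟩ := hex
    obtain ⟨x, hxW⟩ := hWne n
    have hxK₀ : x ∈ K₀ := interior_subset (hWZ n hxW)
    refine ⟨x, hxK₀, ?_⟩
    rcases hn with ⟨hnA, hnB⟩ | ⟨hnB, hnA⟩
    · have e1 : tv (V A) y' yc x = {y'} := tv_of_mem (hWV A n hnA hxW) y' yc
      have e2 : tv (V B) y' yc x = {yc} :=
        tv_of_not_mem_closure (Set.disjoint_left.1 (hWVdisj B n hnB) hxW) y' yc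
      have : dist ((FA A).val' x) ((FA B).val' x) = δ := by
        show dist (tvNC (V A) y' yc x) (tvNC (V B) y' yc x) = δ
        rw [NonemptyCompacts.dist_eq, tvNC_coe, tvNC_coe, e1, e2,
          hausdorffDist_singleton_singleton]
      exact this.ge
    · have e1 : tv (V B) y' yc x = {y'} := tv_of_mem (hWV B n hnB hxW) y' yc
      have e2 : tv (V A) y' yc x = {yc} :=
        tv_of_not_mem_closure (Set.disjoint_left.1 (hWVdisj A n hnA) hxW) y' yc
      have : dist ((FA A).val' x) ((FA B).val' x) = δ := by
        show dist (tvNC (V A) y' yc x) (tvNC (V B) y' yc x) = δ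
        rw [NonemptyCompacts.dist_eq, tvNC_coe, tvNC_coe, e1, e2,
          hausdorffDist_singleton_singleton, dist_comm]
      exact this.ge
  exact not_secondCountable not_countable_set_nat FA hmem (fun _ => K₀) (fun _ => hK₀c)
    hδ hsep hsc

lemma countable_of_locally_sc [DiscreteTopology X] (hY : ¬DiscreteTopology Y)
    (h : ∀ F : MU X Y, ∃ s ∈ nhds F, SecondCountableTopology ↥s) : Countable X := by
  classical
  by_contra hX
  obtain ⟨yc, hyc⟩ := exists_acc_point hY
  set F₀ : MU X Y := mk' (fun _ => sing yc)
    (isMinimalUsco_of_continuous continuous_const) with hF₀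
  obtain ⟨s, hs, hsc⟩ := h F₀
  obtain ⟨⟨K, ε⟩, ⟨hK, hε⟩, hball⟩ := (mu_nhds_basis F₀).mem_iff.1 hs
  obtain ⟨y', hy'ne, hy'ε⟩ := hyc ε hε
  set δ := dist y' yc with hδdef
  have hδ : 0 < δ := dist_pos.2 hy'ne
  have hKfin : K.Finite := hK.finite_of_discrete
  have hι : ¬ Countable ↥(Kᶜ) := by
    intro hc
    apply hX
    have h2 : (univ : Set X).Countable := by
      rw [← union_compl_self K]
      exact hKfin.countable.union (countable_coe_iff.1 hc)
    exact countable_univ_iff.1 h2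
  set f : ↥(Kᶜ) → MU X Y := fun z =>
    mk' (fun x => sing (if x = (z : X) then y' else yc))
      (isMinimalUsco_of_continuous continuous_of_discreteTopology) with hf
  have hmem : ∀ z, f z ∈ s := by
    intro z
    apply hball
    intro x hx
    have hxz : x ≠ (z : X) := fun hh => z.2 (hh ▸ hx)
    have : (f z).val' x = sing yc := by
      show sing (if x = (z : X) then y' else yc) = sing yc
      rw [if_neg hxz]
    show dist (sing yc) ((f z).val' x) < ε
    rw [this, dist_sing, dist_self]
    exact hε
  have hsep : ∀ z w : ↥(Kᶜ), z ≠ w →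
      ∃ x ∈ ({(z : X)} : Set X), δ ≤ dist ((f z).val' x) ((f w).val' x) := by
    intro z w hzw
    refine ⟨(z : X), mem_singleton _, ?_⟩
    have hne : (z : X) ≠ (w : X) := fun hh => hzw (Subtype.ext hh)
    have h1 : (f z).val' (z : X) = sing y' := by
      show sing (if (z : X) = (z : X) then y' else yc) = sing y'
      rw [if_pos rfl]
    have h2 : (f w).val' (z : X) = sing yc := by
      show sing (if (z : X) = (w : X) then y' else yc) = sing yc
      rw [if_neg hne]
    rw [h1, h2, dist_sing]
  exact not_secondCountable hι f hmem (fun z => {(z : X)}) (fun _ => isCompact_singleton)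
    hδ hsep hsc

end S18
end Aux5
noncomputable section Aux6
set_option linter.unusedSectionVars false
namespace S18
open Set Metric Filter Topology

variable {X Y : Type*} [TopologicalSpace X] [MetricSpace Y]

lemma isometry_sing : Isometry (sing : Y → NonemptyCompacts Y) :=
  Isometry.of_dist_eq dist_sing

section Discrete
variable [DiscreteTopology X]

lemma mu_val'_eq_sing (F : MU X Y) (x : X) : ∃ y : Y, F.val' x = sing y := by
  have hmin := F.2
  -- the value set is a singleton
  have hsub : ∀ x, ∃ y : Y, ((F.val' x : Set Y)) = {y} := by
    intro x
    obtain ⟨y, hy⟩ := (F.val' x).nonempty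
    refine ⟨y, subset_antisymm ?_ (singleton_subset_iff.2 hy)⟩
    intro z hz
    by_contra hzy
    -- build smaller usco G
    classical
    set G : X → Set Y := Function.update (fun x' => (F.val' x' : Set Y)) x {y} with hG
    have hGx : G x = {y} := Function.update_self x _ _
    have hGne : ∀ x', x' ≠ x → G x' = (F.val' x' : Set Y) := fun x' hx' =>
      Function.update_of_ne hx' _ _
    have hGusco : IsUsco G := by
      refine ⟨?_, ?_, ?_⟩
      · intro x'
        by_cases hx' : x' = x
        · subst hx'; rw [hGx]; exact singleton_nonempty y
        · rw [hGne x' hx']; exact (F.val' x').nonempty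
      · intro x'
        by_cases hx' : x' = x
        · subst hx'; rw [hGx]; exact isCompact_singleton
        · rw [hGne x' hx']; exact (F.val' x').isCompact
      · intro x' V hV hsubV
        refine ⟨{x'}, isOpen_discrete _, rfl, fun z hz => ?_⟩
        rw [mem_singleton_iff] at hz
        rw [hz]; exact hsubV
    have hGle : ∀ x', G x' ⊆ (F.val' x' : Set Y) := by
      intro x'
      by_cases hx' : x' = x
      · subst hx'; rw [hGx]; exact singleton_subset_iff.2 hy
      · rw [hGne x' hx']
    have heq := hmin.2 G hGusco hGle
    have hfin : G x = (F.val' x : Set Y) := congrFun heq x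
    rw [hGx] at hfin
    rw [← hfin, mem_singleton_iff] at hz
    exact hzy hz
  obtain ⟨y, hy⟩ := hsub x
  refine ⟨y, ?_⟩
  ext1
  exact hy

def muToPi (F : MU X Y) : X → Y := fun x => (mu_val'_eq_sing F x).choose

lemma muToPi_spec (F : MU X Y) (x : X) : F.val' x = sing (muToPi F x) :=
  (mu_val'_eq_sing F x).choose_spec

def piToMu (f : X → Y) : MU X Y :=
  mk' (fun x => sing (f x)) (isMinimalUsco_of_continuous continuous_of_discreteTopology)

lemma sing_injective : Function.Injective (sing : Y → NonemptyCompacts Y) := by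
  intro a b hab
  have h := congrArg (fun s : NonemptyCompacts Y => (s : Set Y)) hab
  simpa [sing_coe] using h

lemma piToMu_muToPi (F : MU X Y) : piToMu (muToPi F) = F := by
  apply Subtype.ext
  funext x
  exact (muToPi_spec F x).symm

lemma muToPi_piToMu (f : X → Y) : muToPi (piToMu f) = f := by
  funext x
  apply sing_injective
  rw [← muToPi_spec (piToMu f) x]
  rfl

lemma continuous_muToPi : Continuous (muToPi : MU X Y → X → Y) := by
  refine continuous_pi fun x => ?_
  rw [isometry_sing.isEmbedding.toIsInducing.continuous_iff]
  have heq : (sing ∘ fun F : MU X Y => muToPi F x) = fun F : MU X Y => F.val' x := by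
    funext F; exact (muToPi_spec F x).symm
  rw [heq]
  have h1 := (UniformOnFun.uniformContinuous_eval_of_mem (NonemptyCompacts Y)
    {K : Set X | IsCompact K} (mem_singleton x)
    (isCompact_singleton : IsCompact ({x} : Set X))).continuous
  exact h1.comp continuous_subtype_val

lemma continuous_piToMu : Continuous (piToMu : (X → Y) → MU X Y) := by
  rw [continuous_iff_continuousAt]
  intro f
  unfold ContinuousAt
  rw [(mu_nhds_basis (piToMu f)).tendsto_right_iff]
  rintro ⟨K, ε⟩ ⟨hK, hε⟩
  have hKfin : K.Finite := hK.finite_of_discrete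
  have hmem : {g : X → Y | ∀ x ∈ K, dist (f x) (g x) < ε} ∈ nhds f := by
    have hset : {g : X → Y | ∀ x ∈ K, dist (f x) (g x) < ε} =
        ⋂ x ∈ K, (fun g : X → Y => g x) ⁻¹' {y | dist (f x) y < ε} := by
      ext g; simp
    rw [hset, Filter.biInter_mem hKfin]
    intro x hx
    have hopen : IsOpen {y : Y | dist (f x) y < ε} := by
      have : {y : Y | dist (f x) y < ε} = ball (f x) ε := by
        ext y; simp [mem_ball, dist_comm]
      rw [this]; exact isOpen_ball
    exact (hopen.preimage (continuous_apply x)).mem_nhds (by simpa using hε)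
  filter_upwards [hmem] with g hg
  intro x hx
  have h1 : (piToMu f).val' x = sing (f x) := rfl
  have h2 : (piToMu g).val' x = sing (g x) := rfl
  rw [h1, h2, dist_sing]
  exact hg x hx

def muHomeo : MU X Y ≃ₜ (X → Y) :=
  { toFun := muToPi, invFun := piToMu,
    left_inv := piToMu_muToPi, right_inv := muToPi_piToMu,
    continuous_toFun := continuous_muToPi, continuous_invFun := continuous_piToMu }

lemma claimA [Countable X] [SeparableSpace Y] :
    SecondCountableTopology (MU X Y) ∧ MetrizableSpace (MU X Y) := by
  haveI : SecondCountableTopology Y := UniformSpace.secondCountable_of_separable Y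
  exact ⟨(muHomeo (X := X) (Y := Y)).isEmbedding.secondCountableTopology,
    (muHomeo (X := X) (Y := Y)).isEmbedding.metrizableSpace⟩

end Discrete
end S18
end Aux6

/-- For separable non-discrete `Y`: `MU(X,Y)` is second-countable metrizable iff it is locally
second-countable iff `X` is countable and discrete. -/
theorem statement18 {X Y : Type*} [TopologicalSpace X] [T2Space X] [LocallyCompactSpace X]
    [MetricSpace Y] [Nontrivial Y] [SeparableSpace Y] (hY : ¬DiscreteTopology Y) :
    ((SecondCountableTopology (MU X Y) ∧ MetrizableSpace (MU X Y)) ↔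
      (Countable X ∧ DiscreteTopology X)) ∧
    ((∀ F : MU X Y, ∃ s ∈ nhds F, SecondCountableTopology ↥s) ↔
      (Countable X ∧ DiscreteTopology X)) := by
  have claimB : (∀ F : MU X Y, ∃ s ∈ nhds F, SecondCountableTopology ↥s) →
      Countable X ∧ DiscreteTopology X := by
    intro h
    haveI hd : DiscreteTopology X := S18.discrete_of_locally_sc hY h
    exact ⟨S18.countable_of_locally_sc hY h, hd⟩
  have claimA : Countable X ∧ DiscreteTopology X →
      SecondCountableTopology (MU X Y) ∧ MetrizableSpace (MU X Y) := by
    rintro ⟨hc, hd⟩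
    exact S18.claimA
  constructor
  · constructor
    · rintro ⟨h1, -⟩
      haveI := h1
      exact claimB fun F => ⟨Set.univ, Filter.univ_mem, Subtype.secondCountableTopology _⟩
    · exact claimA
  · constructor
    · exact claimB
    · intro hcd
      obtain ⟨h1, -⟩ := claimA hcd
      haveI := h1
      exact fun F => ⟨Set.univ, Filter.univ_mem, Subtype.secondCountableTopology _⟩
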